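/- arXiv:2212.03389 — 3 statements merged into one kernel-verified Lean document; each statement's English description precedes it below -/
import Mathlib

section
/- Let G be a finite group having two distinct normal subgroups N₁ and N₂ such that N₁ ≅ N₂ ≅ C₂, the product N₁N₂ is isomorphic to the Klein four-group V₄, and G/N₁ ≅ G/N₂ ≅ Q_{2^k} for some k ≥ 3, where Q_{2^k} denotes the generalized quaternion group of order 2^k. Then G ≅ C₂ × Q_{2^k}. -/
/-!
A normal subgroup of order 2 is central; write `N₁ = {1, z₁}` and `N₂ = {1, z₂}`. The quaternion
group has a unique involution, and `z₂` maps to it in `G ⧸ N₁`. Hence if `g ^ 2 = z₁`, then `g`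
maps to `1` or to the image of `z₂`, so `g ∈ {1, z₁, z₂, z₁ z₂}` and `g ^ 2 = 1`: `z₁` is not a
square in `G`.

Lift the generators `a 1`, `xa 0` of `G ⧸ N₂ ≅ Q` to `α`, `β`. Each of `α ^ (2 ^ (k - 2))` (a square
because `k ≥ 3`) and `β ^ 2` lies over the involution of `Q`, hence in `{z₁, z₁ z₂}`, hence equals
`z₁ z₂`. Likewise `α β α ∈ {β, β z₂}`, and `α β α = β z₂` would give `(α β) ^ 2 = z₁`. So `α`, `β`
satisfy the defining relations of `Q`, which yields a homomorphic section of `G → G ⧸ N₂`; as `N₂`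
is central, `G ≅ N₂ × Q`.
-/

theorem pow_zmod_val_add {M : Type*} [Monoid M] {m : ℕ} [NeZero m] {x : M} (hx : x ^ m = 1)
    (i j : ZMod m) : x ^ (i + j).val = x ^ i.val * x ^ j.val := by
  rw [ZMod.val_add, ← pow_eq_pow_mod _ hx, pow_add]

theorem pow_zmod_val_neg {G : Type*} [Group G] {m : ℕ} [NeZero m] {x : G} (hx : x ^ m = 1)
    (i : ZMod m) : x ^ (-i).val = (x ^ i.val)⁻¹ :=
  eq_inv_of_mul_eq_one_left <| by
    rw [← pow_zmod_val_add hx, neg_add_cancel, ZMod.val_zero, pow_zero]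

theorem pow_two_mul_eq_one_of_sq_eq_pow {G : Type*} [Group G] {α β : G} {n : ℕ}
    (hβ : β ^ 2 = α ^ n) (hαβ : α * β = β * α⁻¹) : α ^ (2 * n) = 1 := by
  have hinv : α ^ n * β = β * α⁻¹ ^ n := (SemiconjBy.pow_right hαβ.symm n).symm
  have hcomm : α ^ n * β = β * α ^ n := by rw [← hβ]; exact pow_mul_comm' β 2
  have : (α ^ n)⁻¹ = α ^ n := by
    rw [← inv_pow]; exact mul_left_cancel (hinv.symm.trans hcomm)
  rw [two_mul, pow_add]; nth_rewrite 2 [← this]; exact mul_inv_cancel _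

theorem ZMod.eq_zero_or_eq_of_add_self_eq_zero {n : ℕ} [NeZero n] {i : ZMod (2 * n)}
    (h : i + i = 0) : i = 0 ∨ i = n := by
  have hdvd : 2 * n ∣ 2 * i.val := by
    rw [← ZMod.natCast_eq_zero_iff]
    push_cast [ZMod.natCast_zmod_val]
    exact (two_mul i).trans h
  obtain ⟨c, hc⟩ := Nat.dvd_of_mul_dvd_mul_left two_pos hdvd
  have hc2 : c < 2 := by
    have := i.val_lt; rw [hc] at this
    exact Nat.lt_of_mul_lt_mul_left (a := n) (by linarith)
  interval_cases c
  · left; rwa [mul_zero, ZMod.val_eq_zero] at hc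
  · right; rw [← ZMod.natCast_zmod_val i, hc, mul_one]

namespace QuaternionGroup

variable {n : ℕ}

theorem sq_eq_one_iff [NeZero n] {x : QuaternionGroup n} : x ^ 2 = 1 ↔ x = 1 ∨ x = a n := by
  constructor
  · intro hx
    cases x with
    | a i =>
      rw [sq, a_mul_a, one_def, a.injEq] at hx
      rcases ZMod.eq_zero_or_eq_of_add_self_eq_zero hx with rfl | rfl
      · exact Or.inl rfl
      · exact Or.inr rfl
    | xa i =>
      rw [xa_sq, one_def, a.injEq, ZMod.natCast_eq_zero_iff] at hx
      exact absurd (Nat.le_of_dvd (NeZero.pos n) hx) (by have := NeZero.pos n; omega)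
  · rintro (rfl | rfl)
    · exact one_pow 2
    · rw [sq, a_mul_a, ← Nat.cast_add, ← two_mul, ZMod.natCast_self, a_zero]

theorem eq_a_of_sq_eq_one [NeZero n] {x : QuaternionGroup n} (hx : x ^ 2 = 1) (hx₁ : x ≠ 1) :
    x = a n :=
  (sq_eq_one_iff.mp hx).resolve_left hx₁

variable {H : Type*} [Group H] [NeZero n]

def lift (α β : H) (hβ : β ^ 2 = α ^ n) (hαβ : α * β = β * α⁻¹) :
    QuaternionGroup n →* H where
  toFun
    | a i => α ^ i.val
    | xa i => β * α ^ i.val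
  map_one' := show α ^ (0 : ZMod (2 * n)).val = 1 by rw [ZMod.val_zero, pow_zero]
  map_mul' := by
    have hα := pow_two_mul_eq_one_of_sq_eq_pow hβ hαβ
    have hcomm (i : ZMod (2 * n)) : α ^ i.val * β = β * α ^ (-i).val := by
      rw [pow_zmod_val_neg hα, ← inv_pow]; exact (SemiconjBy.pow_right hαβ.symm _).symm
    rintro (i | i) (j | j) <;> simp only [a_mul_a, a_mul_xa, xa_mul_a, xa_mul_xa]
    · exact pow_zmod_val_add hα i j
    · rw [← mul_assoc, hcomm, mul_assoc, ← pow_zmod_val_add hα, neg_add_eq_sub]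
    · rw [mul_assoc, ← pow_zmod_val_add hα]
    · rw [mul_assoc, ← mul_assoc (α ^ _), hcomm, ← mul_assoc, ← mul_assoc, ← sq, hβ, mul_assoc,
        ← pow_zmod_val_add hα, add_sub_assoc, pow_zmod_val_add hα, ZMod.val_natCast_of_lt,
        neg_add_eq_sub]
      have := NeZero.pos n; omega

@[simp]
theorem lift_a (α β : H) (hβ : β ^ 2 = α ^ n) (hαβ : α * β = β * α⁻¹) (i : ZMod (2 * n)) :
    lift α β hβ hαβ (a i) = α ^ i.val := rfl

@[simp]
theorem lift_xa (α β : H) (hβ : β ^ 2 = α ^ n) (hαβ : α * β = β * α⁻¹) (i : ZMod (2 * n)) :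
    lift α β hβ hαβ (xa i) = β * α ^ i.val := rfl

end QuaternionGroup

section

variable {G : Type*} [Group G]

theorem Subgroup.exists_forall_mem_iff_of_mulEquiv_zmod_two {N : Subgroup G}
    (e : N ≃* Multiplicative (ZMod 2)) :
    ∃ z : G, z ≠ 1 ∧ z ^ 2 = 1 ∧ ∀ x, x ∈ N ↔ x = 1 ∨ x = z := by
  have hC₂ : ∀ y : Multiplicative (ZMod 2), y = 1 ∨ y = Multiplicative.ofAdd 1 := by decide
  refine ⟨e.symm (Multiplicative.ofAdd 1), ?_, ?_, fun x => ⟨fun hx => ?_, ?_⟩⟩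
  · rw [Ne, OneMemClass.coe_eq_one, MulEquiv.map_eq_one_iff]; decide
  · rw [← Subgroup.coe_pow, ← map_pow,
      show (Multiplicative.ofAdd 1 : Multiplicative (ZMod 2)) ^ 2 = 1 by decide, map_one,
      Subgroup.coe_one]
  · rcases hC₂ (e ⟨x, hx⟩) with h | h
    · left; simpa using congrArg (fun y => (e.symm y : G)) h
    · right; simpa using congrArg (fun y => (e.symm y : G)) h
  · rintro (rfl | rfl)
    · exact N.one_mem
    · exact Subtype.property _

theorem Subgroup.mem_center_of_forall_mem_iff {N : Subgroup G} [N.Normal] {z : G}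
    (hN : ∀ x, x ∈ N ↔ x = 1 ∨ x = z) : z ∈ Subgroup.center G := by
  rw [Subgroup.mem_center_iff]
  intro g
  rcases (hN _).mp (Subgroup.Normal.conj_mem ‹_› z ((hN z).mpr (Or.inr rfl)) g) with h | h
  · rw [conj_eq_one_iff.mp h, mul_one, one_mul]
  · exact mul_inv_eq_iff_eq_mul.mp h

theorem Subgroup.exists_mem_center_of_mulEquiv_zmod_two {N : Subgroup G} [N.Normal]
    (e : N ≃* Multiplicative (ZMod 2)) :
    ∃ z ∈ Subgroup.center G, z ≠ 1 ∧ z ^ 2 = 1 ∧ ∀ x, x ∈ N ↔ x = 1 ∨ x = z := by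
  obtain ⟨z, hz, hz₂, hN⟩ := exists_forall_mem_iff_of_mulEquiv_zmod_two e
  exact ⟨z, mem_center_of_forall_mem_iff hN, hz, hz₂, hN⟩

theorem eq_or_eq_mul_of_map_eq {Q : Type*} [Group Q] {ρ : G →* Q} {z : G}
    (hker : ∀ x, ρ x = 1 ↔ x = 1 ∨ x = z) {x y : G} (h : ρ x = ρ y) : x = y ∨ x = y * z := by
  rcases (hker (y⁻¹ * x)).mp (by rw [map_mul, map_inv, h, inv_mul_cancel]) with h | h
  · exact Or.inl (inv_mul_eq_one.mp h).symm
  · exact Or.inr (inv_mul_eq_iff_eq_mul.mp h)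

noncomputable def MonoidHom.kerProdMulEquivOfRightInverse {Q : Type*} [Group Q] (ρ : G →* Q)
    (s : Q →* G) (hs : Function.RightInverse s ρ) (hker : ρ.ker ≤ Subgroup.center G) :
    ρ.ker × Q ≃* G :=
  MulEquiv.ofBijective
    (ρ.ker.subtype.noncommCoprod s fun x q =>
      Commute.symm (Subgroup.mem_center_iff.mp (hker x.2) (s q)))
    ⟨by
      rw [injective_iff_map_eq_one]
      rintro ⟨x, q⟩ h
      rw [MonoidHom.noncommCoprod_apply, Subgroup.coe_subtype] at h
      have hq : q = 1 := by
        simpa [hs q, MonoidHom.mem_ker.mp x.2] using congrArg ρ h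
      subst hq
      rw [map_one, mul_one] at h
      exact Prod.ext (Subtype.ext h) rfl,
    fun g => ⟨(⟨g * (s (ρ g))⁻¹, by simp [hs (ρ g)]⟩, ρ g), by simp⟩⟩

end

open QuaternionGroup

section

variable {G : Type*} [Group G] {n : ℕ} [NeZero n] {ρ : G →* QuaternionGroup n} {z₁ z₂ : G}

theorem sq_ne_of_map_eq_a (hker : ∀ x, ρ x = 1 ↔ x = 1 ∨ x = z₁) (hz₁ : z₁ ≠ 1)
    (hz₁sq : z₁ ^ 2 = 1) (hz₂ : z₂ ∈ Subgroup.center G) (hz₂sq : z₂ ^ 2 = 1) (hρz₂ : ρ z₂ = a n)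
    (g : G) : g ^ 2 ≠ z₁ := by
  intro hg
  suffices g ^ 2 = 1 from hz₁ (hg ▸ this)
  have hρg : ρ g ^ 2 = 1 := by rw [← map_pow, hg, hker]; exact Or.inr rfl
  rcases QuaternionGroup.sq_eq_one_iff.mp hρg with h | h
  · rcases (hker g).mp h with rfl | rfl
    · exact one_pow 2
    · exact hz₁sq
  · rcases eq_or_eq_mul_of_map_eq hker (h.trans hρz₂.symm) with rfl | rfl
    · exact hz₂sq
    · have hc : Commute z₁ z₂ := Subgroup.mem_center_iff.mp hz₂ z₁
      rw [hc.symm.mul_pow, hz₂sq, hz₁sq, one_mul]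

theorem exists_rightInverse_of_forall_sq_ne (hn : Even n) (hρ : Function.Surjective ρ)
    (hker : ∀ x, ρ x = 1 ↔ x = 1 ∨ x = z₂) (hz₂ : z₂ ∈ Subgroup.center G) (hz₂sq : z₂ ^ 2 = 1)
    (hρz₁ : ρ z₁ = a n) (hsq : ∀ g : G, g ^ 2 ≠ z₁) :
    ∃ s : QuaternionGroup n →* G, Function.RightInverse s ρ := by
  obtain ⟨α, hα⟩ := hρ (a 1)
  obtain ⟨β, hβ⟩ := hρ (xa 0)
  have hsq_eq (g : G) (hg : ρ g ^ 2 = a n) : g ^ 2 = z₁ * z₂ :=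
    (eq_or_eq_mul_of_map_eq hker ((map_pow ρ g 2).trans (hg.trans hρz₁.symm))).resolve_left
      (hsq g)
  have hαn : α ^ n = z₁ * z₂ := by
    obtain ⟨j, rfl⟩ := hn
    rw [pow_add, ← sq, hsq_eq]
    rw [map_pow, hα, a_one_pow, sq, a_mul_a, Nat.cast_add]
  have hβsq : β ^ 2 = α ^ n := by rw [hαn]; exact hsq_eq β (by rw [hβ, xa_sq])
  have hαβ : α * β = β * α⁻¹ := by
    rcases eq_or_eq_mul_of_map_eq hker (x := α * β * α) (y := β) (by simp [hα, hβ]) with h | h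
    · exact eq_mul_inv_of_mul_eq h
    · refine absurd ?_ (hsq (α * β))
      rw [sq, ← mul_assoc, h, mul_assoc, (Subgroup.mem_center_iff.mp hz₂ β).symm, ← mul_assoc,
        ← sq, hβsq, hαn, mul_assoc, ← sq, hz₂sq, mul_one]
  refine ⟨lift α β hβsq hαβ, ?_⟩
  rintro (i | i)
  · rw [lift_a, map_pow, hα, a_one_pow, ZMod.natCast_zmod_val]
  · rw [lift_xa, map_mul, map_pow, hα, hβ, a_one_pow, ZMod.natCast_zmod_val, xa_mul_a,
      zero_add]

end

theorem stmt_2_general {G : Type} [Group G]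
    (N₁ N₂ : Subgroup G) [N₁.Normal] [N₂.Normal] (hne : N₁ ≠ N₂)
    (h₁ : Nonempty (N₁ ≃* Multiplicative (ZMod 2)))
    (h₂ : Nonempty (N₂ ≃* Multiplicative (ZMod 2)))
    (k : ℕ) (hk : 3 ≤ k)
    (hQ₁ : Nonempty ((G ⧸ N₁) ≃* QuaternionGroup (2 ^ (k - 2))))
    (hQ₂ : Nonempty ((G ⧸ N₂) ≃* QuaternionGroup (2 ^ (k - 2)))) :
    Nonempty (G ≃* (Multiplicative (ZMod 2) × QuaternionGroup (2 ^ (k - 2)))) := by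
  obtain ⟨e₁⟩ := h₁
  obtain ⟨e₂⟩ := h₂
  obtain ⟨φ₁⟩ := hQ₁
  obtain ⟨φ₂⟩ := hQ₂
  obtain ⟨z₁, -, hz₁, hz₁sq, hN₁⟩ := Subgroup.exists_mem_center_of_mulEquiv_zmod_two e₁
  obtain ⟨z₂, hz₂c, hz₂, hz₂sq, hN₂⟩ := Subgroup.exists_mem_center_of_mulEquiv_zmod_two e₂
  let ρ₁ := (φ₁ : G ⧸ N₁ →* QuaternionGroup (2 ^ (k - 2))).comp (QuotientGroup.mk' N₁)
  let ρ₂ := (φ₂ : G ⧸ N₂ →* QuaternionGroup (2 ^ (k - 2))).comp (QuotientGroup.mk' N₂)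
  have hker₂ : ρ₂.ker = N₂ := by rw [MonoidHom.ker_mulEquiv_comp, QuotientGroup.ker_mk']
  have hρ₁ (x : G) : ρ₁ x = 1 ↔ x = 1 ∨ x = z₁ := by
    rw [← MonoidHom.mem_ker, MonoidHom.ker_mulEquiv_comp, QuotientGroup.ker_mk', hN₁]
  have hρ₂ (x : G) : ρ₂ x = 1 ↔ x = 1 ∨ x = z₂ := by rw [← MonoidHom.mem_ker, hker₂, hN₂]
  have hz₁₂ : z₁ ≠ z₂ := fun h => hne (by ext x; rw [hN₁, hN₂, h])
  have hρ₁z₂ : ρ₁ z₂ = a _ :=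
    eq_a_of_sq_eq_one (by rw [← map_pow, hz₂sq, map_one]) (by rw [Ne, hρ₁]; tauto)
  have hρ₂z₁ : ρ₂ z₁ = a _ :=
    eq_a_of_sq_eq_one (by rw [← map_pow, hz₁sq, map_one]) (by rw [Ne, hρ₂]; tauto)
  obtain ⟨s, hs⟩ := exists_rightInverse_of_forall_sq_ne ((Nat.even_pow' (by omega)).mpr even_two)
    (φ₂.surjective.comp (QuotientGroup.mk'_surjective N₂)) hρ₂ hz₂c hz₂sq hρ₂z₁
    (sq_ne_of_map_eq_a hρ₁ hz₁ hz₁sq hz₂c hz₂sq hρ₁z₂)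
  have hkerc : ρ₂.ker ≤ Subgroup.center G := fun x hx => by
    rcases (hρ₂ x).mp hx with rfl | rfl
    exacts [Subgroup.one_mem _, hz₂c]
  exact ⟨(ρ₂.kerProdMulEquivOfRightInverse s hs hkerc).symm.trans
    (((MulEquiv.subgroupCongr hker₂).trans e₂).prodCongr (MulEquiv.refl _))⟩

/-- If a finite group G has two distinct normal subgroups N₁, N₂ with
N₁ ≅ N₂ ≅ C₂, N₁N₂ ≅ V₄, and G/N₁ ≅ G/N₂ ≅ Q_{2^k} (k ≥ 3), then G ≅ C₂ × Q_{2^k}. -/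
theorem stmt_2 {G : Type} [Group G] [Finite G]
    (N₁ N₂ : Subgroup G) [N₁.Normal] [N₂.Normal] (hne : N₁ ≠ N₂)
    (h₁ : Nonempty (N₁ ≃* Multiplicative (ZMod 2)))
    (h₂ : Nonempty (N₂ ≃* Multiplicative (ZMod 2)))
    (hV : Nonempty ((N₁ ⊔ N₂ : Subgroup G) ≃*
      (Multiplicative (ZMod 2) × Multiplicative (ZMod 2))))
    (k : ℕ) (hk : 3 ≤ k)
    (hQ₁ : Nonempty ((G ⧸ N₁) ≃* QuaternionGroup (2 ^ (k - 2))))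
    (hQ₂ : Nonempty ((G ⧸ N₂) ≃* QuaternionGroup (2 ^ (k - 2)))) :
    Nonempty (G ≃* (Multiplicative (ZMod 2) × QuaternionGroup (2 ^ (k - 2)))) :=
  stmt_2_general N₁ N₂ hne h₁ h₂ k hk hQ₁ hQ₂
end

section
/- Let Γ be a finite simple graph. If Γ admits an orientation of its edges containing no directed path with 3 edges, then Γ is 3-colorable. -/
/-- A finite simple graph admitting an orientation with no directed path of
3 edges is 3-colorable (special case of Gallai–Hasse–Roy–Vitaver). -/
theorem stmt_8 {V : Type} [Finite V] (Γ : SimpleGraph V)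
    (D : V → V → Prop)
    (horient : ∀ u v : V, Γ.Adj u v ↔ (D u v ∨ D v u))
    (hanti : ∀ u v : V, ¬ (D u v ∧ D v u))
    (hno3path : ¬ ∃ v₀ v₁ v₂ v₃ : V, D v₀ v₁ ∧ D v₁ v₂ ∧ D v₂ v₃) :
    Γ.Colorable 3 := by
  classical
  let c : V → Fin 3 := fun v =>
    if ∃ x y, D x y ∧ D y v then 2 else if ∃ x, D x v then 1 else 0
  have key : ∀ u v, D u v → c u ≠ c v := by
    intro u v huv
    have hAu : ¬ ∃ x y, D x y ∧ D y u := by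
      rintro ⟨x, y, hxy, hyu⟩
      exact hno3path ⟨x, y, u, v, hxy, hyu, huv⟩
    simp only [c, if_neg hAu]
    by_cases hBu : ∃ x, D x u
    · obtain ⟨x, hx⟩ := hBu
      have hAv : ∃ x y, D x y ∧ D y v := ⟨x, u, hx, huv⟩
      rw [if_pos ⟨x, hx⟩, if_pos hAv]; decide
    · rw [if_neg hBu]
      split_ifs with h1 h2 <;> first | decide | exact absurd ⟨u, huv⟩ h2
  refine ⟨SimpleGraph.Coloring.mk c ?_⟩
  intro u v hadj
  rcases (horient u v).1 hadj with h | h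
  · exact key u v h
  · exact (key v u h).symm
end

section
/- Let G be a finite group of the form G = Q ⋊ D where Q is a nontrivial q-group for some odd prime q and D is a group isomorphic to the dihedral group D₈ of order 8. Then G contains an element of order 2q. -/
private lemma fpf_inverts {Q : Type} [Group Q] [Finite Q] (σ : MulAut Q)
    (hfix : ∀ x : Q, σ x = x → x = 1) (hinv : ∀ x : Q, σ (σ x) = x) :
    ∀ g : Q, σ g = g⁻¹ := by
  have hinj : Function.Injective (fun x : Q => x⁻¹ * σ x) := by
    intro x y h
    simp only at h
    have h' : σ x = x * (y⁻¹ * σ y) := by rw [← h]; group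
    have key : σ (x * y⁻¹) = x * y⁻¹ := by
      rw [map_mul, map_inv, h']; group
    have := hfix _ key
    rwa [mul_inv_eq_one] at this
  have hsurj := Finite.injective_iff_surjective.mp hinj
  intro g
  obtain ⟨x, hx⟩ := hsurj g
  simp only at hx
  calc σ g = σ (x⁻¹ * σ x) := by rw [hx]
    _ = (σ x)⁻¹ * σ (σ x) := by rw [map_mul, map_inv]
    _ = (σ x)⁻¹ * x := by rw [hinv]
    _ = g⁻¹ := by rw [← hx]; group

/-- If G = Q ⋊ D with Q a nontrivial q-group (q an odd prime) and D ≅ D₈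
(the dihedral group of order 8), then G contains an element of order 2q. -/
theorem stmt_11 {Q D : Type} [Group Q] [Group D] [Finite Q] [Finite D]
    (q : ℕ) (hq : q.Prime) (hodd : Odd q)
    (hQ : IsPGroup q Q) (hQnt : Nontrivial Q)
    (hD : Nonempty (D ≃* DihedralGroup 4))
    (φ : D →* MulAut Q) :
    ∃ g : Q ⋊[φ] D, orderOf g = 2 * q := by
  classical
  obtain ⟨e⟩ := hD
  set t : D := e.symm (.r 2) with ht
  set s : D := e.symm (.sr 0) with hs
  have htt : t * t = 1 := by
    apply e.injective
    rw [map_mul, map_one, ht, e.apply_symm_apply]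
    decide
  have hss : s * s = 1 := by
    apply e.injective
    rw [map_mul, map_one, hs, e.apply_symm_apply]
    decide
  have htss : (t * s) * (t * s) = 1 := by
    apply e.injective
    rw [map_mul, map_mul, map_one, ht, hs, e.apply_symm_apply, e.apply_symm_apply]
    decide
  have htne : t ≠ 1 := by
    intro h
    have := congrArg e h
    rw [map_one, ht, e.apply_symm_apply] at this
    exact absurd this (by decide)
  have hsne : s ≠ 1 := by
    intro h
    have := congrArg e h
    rw [map_one, hs, e.apply_symm_apply] at this
    exact absurd this (by decide)
  have htsne : t * s ≠ 1 := by
    intro h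
    have := congrArg e h
    rw [map_one, map_mul, ht, hs, e.apply_symm_apply, e.apply_symm_apply] at this
    exact absurd this (by decide)
  have hinvol : ∀ u : D, u * u = 1 → ∀ x : Q, φ u (φ u x) = x := by
    intro u hu x
    rw [← MulAut.mul_apply, ← map_mul, hu, map_one, MulAut.one_apply]
  -- find an involution with a nontrivial fixed point
  have key : ∃ u : D, u ≠ 1 ∧ u * u = 1 ∧ ∃ x : Q, x ≠ 1 ∧ φ u x = x := by
    by_cases hT : ∃ x : Q, x ≠ 1 ∧ φ t x = x
    · exact ⟨t, htne, htt, hT⟩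
    by_cases hS : ∃ x : Q, x ≠ 1 ∧ φ s x = x
    · exact ⟨s, hsne, hss, hS⟩
    push_neg at hT hS
    have fixT : ∀ x : Q, φ t x = x → x = 1 := by
      intro x hx; by_contra h; exact hT x h hx
    have fixS : ∀ x : Q, φ s x = x → x = 1 := by
      intro x hx; by_contra h; exact hS x h hx
    have invT := fpf_inverts (φ t) fixT (hinvol t htt)
    have invS := fpf_inverts (φ s) fixS (hinvol s hss)
    obtain ⟨x0, hx0⟩ := exists_ne (1 : Q)
    refine ⟨t * s, htsne, htss, x0, hx0, ?_⟩
    rw [map_mul, MulAut.mul_apply, invS x0, invT, inv_inv]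
  obtain ⟨u, hu1, huu, x0, hx0ne, hx0fix⟩ := key
  -- extract an element of order exactly q fixed by φ u
  have hord0 : orderOf x0 ≠ 0 := (orderOf_pos x0).ne'
  obtain ⟨k, hk⟩ := hQ x0
  have hdvd : orderOf x0 ∣ q ^ k := orderOf_dvd_of_pow_eq_one hk
  obtain ⟨j, hjk, hje⟩ := (Nat.dvd_prime_pow hq).mp hdvd
  have hj1 : j ≠ 0 := by
    rintro rfl
    rw [pow_zero] at hje
    exact hx0ne (orderOf_eq_one_iff.mp hje)
  have hqd : q ∣ orderOf x0 := hje ▸ dvd_pow_self q hj1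
  set x : Q := x0 ^ (orderOf x0 / q) with hxdef
  have hxq : orderOf x = q := orderOf_pow_orderOf_div hord0 hqd
  have hxfix : φ u x = x := by rw [hxdef, map_pow, hx0fix]
  refine ⟨⟨x, u⟩, ?_⟩
  set g : Q ⋊[φ] D := ⟨x, u⟩ with hg
  have hg2 : g ^ 2 = SemidirectProduct.inl (x * x) := by
    rw [pow_two]
    ext
    · rw [SemidirectProduct.mul_left, SemidirectProduct.left_inl]
      show x * φ u x = x * x
      rw [hxfix]
    · rw [SemidirectProduct.mul_right, SemidirectProduct.right_inl]
      exact huu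
  have h2 : orderOf (g ^ 2) = q := by
    rw [hg2, orderOf_injective SemidirectProduct.inl SemidirectProduct.inl_injective,
      ← pow_two, orderOf_pow' x (two_ne_zero), hxq]
    have hcop : Nat.gcd q 2 = 1 := Nat.coprime_two_right.mpr hodd
    rw [hcop, Nat.div_one]
  have hu2 : orderOf u = 2 := by
    have : u ^ 2 = 1 := by rw [pow_two]; exact huu
    exact orderOf_eq_prime this hu1
  have h2d : (2 : ℕ) ∣ orderOf g := by
    have hmap := orderOf_map_dvd (SemidirectProduct.rightHom) g
    have : SemidirectProduct.rightHom g = u := rfl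
    rw [this, hu2] at hmap
    exact hmap
  have h2' : orderOf g / 2 = q := by
    rw [orderOf_pow' g (two_ne_zero)] at h2
    rwa [Nat.gcd_comm, Nat.gcd_eq_left h2d] at h2
  exact (Nat.eq_mul_of_div_eq_right h2d h2').symm ▸ rfl
end
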